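/- Let λ > 0 be a real number, R₀ > 0, let h be a holomorphic function on the open disc {z ∈ ℂ : |z| < R₀} with h(0) ≠ 0, let −π < α ≤ β < π, and define g(z) := z^λ · h(z), where z^λ denotes the principal branch. Then there exist r ∈ (0, R₀) and C > 0 with the following property. Let μ : [0,1] → ℂ be any continuously differentiable path with nowhere-vanishing derivative such that 0 < |μ(s)| ≤ r and α ≤ arg μ(s) ≤ β for all s, set ‖μ‖_g := max_s |g(μ(s))| and E_g := sup_s [[(g∘μ)′(s)/(i·g(μ(s)))]] ∈ [0, +∞]. Then: (i) max_s |μ(s)| ≤ C·(‖μ‖_g)^{1/λ}; and (ii) if E_g + C·(‖μ‖_g)^{1/λ} < π/2, then for every s one has [[μ′(s)/(i·μ(s))]] ≤ E_g + C·(‖μ‖_g)^{1/λ}; in other words, the rugosity of μ is controlled by the rugosity and the size of the image path g∘μ. -/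

import Mathlib

/-! Near `0` we have `|h| > m > 0` and `|h'/h| < L`, so `|z|^λ·m ≤ |g z|`, which bounds `|μ|`.
Along the path, `(g ∘ μ)'/(i·g ∘ μ) = (μ'/(i·μ))·c` with `c = μ·g'(μ)/g(μ) = λ + μ·h'(μ)/h(μ)`,
so `c` lies within `L·|μ|` of the positive real `λ` and `|arg c| ≤ (2L/λ)·|μ|`. As long as both
sides keep their argument in `(-π/2, π/2)`, multiplying by `c` moves the argument by at most
`|arg c|`. -/

noncomputable def rugosityBracket (z : ℂ) : ENNReal :=
  if |Complex.arg z| < Real.pi / 2 then ENNReal.ofReal |Complex.arg z| else ⊤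

open Complex Filter Topology Metric Set Real

lemma sub_norm_sub_ofReal_le_re (c : ℂ) (a : ℝ) : a - ‖c - a‖ ≤ c.re := by
  have := (abs_le.1 (abs_re_le_norm (c - a))).1
  simp only [sub_re, ofReal_re] at this
  linarith

lemma abs_arg_le_abs_im_div_re {z : ℂ} (hz : 0 < z.re) : |arg z| ≤ |z.im| / z.re := by
  have harg : |arg z| < π / 2 := abs_arg_lt_pi_div_two_iff.2 (Or.inl hz)
  calc |arg z| ≤ Real.tan |arg z| := Real.le_tan (abs_nonneg _) harg
    _ ≤ |Real.tan (arg z)| := by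
        rcases abs_cases (arg z) with ⟨he, -⟩ | ⟨he, -⟩
        · rw [he]; exact le_abs_self _
        · rw [he, Real.tan_neg]; exact neg_le_abs _
    _ = |z.im| / z.re := by rw [tan_arg, abs_div, abs_of_pos hz]

lemma abs_arg_le_of_norm_sub_ofReal_le {a : ℝ} (ha : 0 < a) {c : ℂ} (hc : ‖c - a‖ ≤ a / 2) :
    |arg c| ≤ 2 / a * ‖c - a‖ := by
  have hre : a / 2 ≤ c.re := by linarith [sub_norm_sub_ofReal_le_re c a]
  have him : |c.im| ≤ ‖c - a‖ := by
    simpa only [sub_im, ofReal_im, sub_zero] using abs_im_le_norm (c - a)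
  calc |arg c| ≤ |c.im| / c.re := abs_arg_le_abs_im_div_re (by linarith)
    _ ≤ ‖c - a‖ / (a / 2) := div_le_div₀ (norm_nonneg _) him (by positivity) hre
    _ = 2 / a * ‖c - a‖ := by ring

lemma abs_arg_le_abs_arg_mul_add {w c : ℂ} (hc : 0 < c.re) (hwc : |arg (w * c)| < π / 2) :
    |arg w| ≤ |arg (w * c)| + |arg c| := by
  rcases eq_or_ne w 0 with rfl | hw
  · simp
  have hc0 : c ≠ 0 := fun h => by simp [h] at hc
  have hc' : |arg c| < π / 2 := abs_arg_lt_pi_div_two_iff.2 (Or.inl hc)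
  have hc_inv : arg c⁻¹ = -arg c := by
    rw [arg_inv, if_neg]
    intro hπ
    rw [hπ, abs_of_pos pi_pos] at hc'
    linarith [pi_pos]
  have hsum : arg (w * c) + arg c⁻¹ ∈ Ioc (-π) π := by
    rw [hc_inv]
    constructor <;> linarith [abs_lt.1 hwc, abs_lt.1 hc']
  have hw_eq : arg w = arg (w * c) - arg c := by
    rw [sub_eq_add_neg, ← hc_inv, ← arg_mul (mul_ne_zero hw hc0) (inv_ne_zero hc0) hsum,
      mul_inv_cancel_right₀ hc0]
  rw [hw_eq]
  exact abs_sub _ _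

lemma rugosityBracket_of_abs_arg_lt {z : ℂ} (hz : |arg z| < π / 2) :
    rugosityBracket z = ENNReal.ofReal |arg z| :=
  if_pos hz

lemma abs_arg_lt_of_rugosityBracket_lt_top {z : ℂ} (hz : rugosityBracket z < ⊤) :
    |arg z| < π / 2 := by
  by_contra h
  simp [rugosityBracket, h] at hz

lemma rugosityBracket_le_add_of_mul {w c : ℂ} {S : ENNReal} {ε : ℝ} (hc : 0 < c.re)
    (hcε : |arg c| ≤ ε) (hwc : rugosityBracket (w * c) ≤ S)
    (hS : S + ENNReal.ofReal ε < ENNReal.ofReal (π / 2)) :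
    rugosityBracket w ≤ S + ENNReal.ofReal ε := by
  have hε : 0 ≤ ε := (abs_nonneg _).trans hcε
  have hwcε : rugosityBracket (w * c) + ENNReal.ofReal ε < ENNReal.ofReal (π / 2) :=
    (add_le_add_left hwc _).trans_lt hS
  have hwc_lt : |arg (w * c)| < π / 2 := abs_arg_lt_of_rugosityBracket_lt_top
    ((le_self_add.trans_lt hwcε).trans ENNReal.ofReal_lt_top)
  rw [rugosityBracket_of_abs_arg_lt hwc_lt, ← ENNReal.ofReal_add (abs_nonneg _) hε,
    ENNReal.ofReal_lt_ofReal_iff (by positivity)] at hwcε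
  have hw : |arg w| ≤ |arg (w * c)| + ε :=
    (abs_arg_le_abs_arg_mul_add hc hwc_lt).trans (by linarith)
  calc rugosityBracket w = ENNReal.ofReal |arg w| :=
        rugosityBracket_of_abs_arg_lt (by linarith)
    _ ≤ ENNReal.ofReal (|arg (w * c)| + ε) := ENNReal.ofReal_le_ofReal hw
    _ = rugosityBracket (w * c) + ENNReal.ofReal ε := by
        rw [rugosityBracket_of_abs_arg_lt hwc_lt, ENNReal.ofReal_add (abs_nonneg _) hε]
    _ ≤ S + ENNReal.ofReal ε := add_le_add_left hwc _

lemma exists_mem_Ioo_forall_norm_le {E : Type*} [SeminormedAddCommGroup E] {P : E → Prop}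
    (hP : ∀ᶠ z in 𝓝 0, P z) {R : ℝ} (hR : 0 < R) : ∃ r ∈ Ioo 0 R, ∀ z, ‖z‖ ≤ r → P z := by
  obtain ⟨ε, hε, hεP⟩ := nhds_basis_closedBall.eventually_iff.1 hP
  refine ⟨min ε (R / 2), ⟨by positivity, (min_le_right _ _).trans_lt (by linarith)⟩,
    fun z hz => hεP ?_⟩
  exact mem_closedBall_zero_iff.2 (hz.trans (min_le_left _ _))

lemma DifferentiableOn.continuousAt_logDeriv {h : ℂ → ℂ} {U : Set ℂ}
    (hh : DifferentiableOn ℂ h U) (hU : IsOpen U) {x : ℂ} (hx : x ∈ U) (hx0 : h x ≠ 0) :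
    ContinuousAt (logDeriv h) x := by
  have han := hh.analyticOnNhd hU
  exact (han.deriv x hx).continuousAt.div (han x hx).continuousAt hx0

lemma DifferentiableOn.exists_radius_norm_gt_and_norm_logDeriv_lt {h : ℂ → ℂ} {R ε : ℝ}
    (hR : 0 < R) (hε : 0 < ε) (hh : DifferentiableOn ℂ h (ball 0 R)) (hh0 : h 0 ≠ 0) :
    ∃ r ∈ Ioo 0 R, ∃ m > 0, ∃ L > 0, L * r < ε ∧
      ∀ z, ‖z‖ ≤ r → DifferentiableAt ℂ h z ∧ m < ‖h z‖ ∧ ‖logDeriv h z‖ < L := by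
  have h0 : (0 : ℂ) ∈ ball 0 R := mem_ball_self hR
  have hm : 0 < ‖h 0‖ := norm_pos_iff.2 hh0
  set L := ‖logDeriv h 0‖ + 1
  have hL : 0 < L := by positivity
  have hloc : ∀ᶠ z in 𝓝 (0 : ℂ),
      DifferentiableAt ℂ h z ∧ ‖h 0‖ / 2 < ‖h z‖ ∧ ‖logDeriv h z‖ < L := by
    refine (eventually_of_mem (isOpen_ball.mem_nhds h0) fun z hz =>
      hh.differentiableAt (isOpen_ball.mem_nhds hz)).and (.and ?_ ?_)
    · exact (hh.continuousOn.continuousAt (isOpen_ball.mem_nhds h0)).norm.eventually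
        (lt_mem_nhds (half_lt_self hm))
    · exact (hh.continuousAt_logDeriv isOpen_ball h0 hh0).norm.eventually
        (gt_mem_nhds (lt_add_one _))
  obtain ⟨r, ⟨hr0, hr⟩, hr_loc⟩ := exists_mem_Ioo_forall_norm_le hloc (lt_min hR (div_pos hε hL))
  refine ⟨r, ⟨hr0, hr.trans_le (min_le_left _ _)⟩, ‖h 0‖ / 2, half_pos hm, L, hL, ?_, hr_loc⟩
  exact (lt_div_iff₀' hL).1 (hr.trans_le (min_le_right _ _))

lemma mul_logDeriv_cpow_mul {a z : ℂ} {h : ℂ → ℂ} (hz : z ∈ slitPlane)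
    (hh : DifferentiableAt ℂ h z) (hz0 : h z ≠ 0) :
    z * logDeriv (fun w => w ^ a * h w) z = a + z * logDeriv h z := by
  have hz' : z ≠ 0 := slitPlane_ne_zero hz
  have hza : z ^ a ≠ 0 := cpow_ne_zero_iff.2 (Or.inl hz')
  have hcpow := (hasStrictDerivAt_cpow_const (c := a) hz).hasDerivAt
  rw [logDeriv_mul (f := fun w => w ^ a) z hza hz0 hcpow.differentiableAt hh,
    logDeriv_apply, hcpow.deriv, cpow_sub _ _ hz', cpow_one]
  field_simp

lemma norm_mul_logDeriv_cpow_mul_sub_le {a z : ℂ} {h : ℂ → ℂ} {L : ℝ} (hz : z ∈ slitPlane)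
    (hh : DifferentiableAt ℂ h z) (hz0 : h z ≠ 0) (hL : ‖logDeriv h z‖ ≤ L) :
    ‖z * logDeriv (fun w => w ^ a * h w) z - a‖ ≤ L * ‖z‖ := by
  rw [mul_logDeriv_cpow_mul hz hh hz0, add_sub_cancel_left, norm_mul, mul_comm]
  gcongr

lemma derivWithin_comp_div_I_mul {g : ℂ → ℂ} {μ : ℝ → ℂ} {μ' : ℂ} {S : Set ℝ} {s : ℝ}
    (hg : DifferentiableAt ℂ g (μ s)) (hμ : HasDerivWithinAt μ μ' S s)
    (hS : UniqueDiffWithinAt ℝ S s) (hμs : μ s ≠ 0) :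
    derivWithin (g ∘ μ) S s / (I * g (μ s)) = μ' / (I * μ s) * (μ s * logDeriv g (μ s)) := by
  rw [(hg.hasDerivAt.comp_hasDerivWithinAt s hμ).derivWithin hS, logDeriv_apply]
  rcases eq_or_ne (g (μ s)) 0 with hg0 | hg0
  · simp [hg0]
  · field_simp

lemma rugosityBracket_le_of_norm_mul_logDeriv_sub_le {g : ℂ → ℂ} {μ : ℝ → ℂ} {μ' : ℂ}
    {S : Set ℝ} {s a ε : ℝ} {T : ENNReal} (ha : 0 < a) (hg : DifferentiableAt ℂ g (μ s))
    (hμ : HasDerivWithinAt μ μ' S s) (hS : UniqueDiffWithinAt ℝ S s) (hμs : μ s ≠ 0)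
    (hca : ‖μ s * logDeriv g (μ s) - a‖ ≤ a / 2) (hε : 2 / a * ‖μ s * logDeriv g (μ s) - a‖ ≤ ε)
    (hT : rugosityBracket (derivWithin (g ∘ μ) S s / (I * g (μ s))) ≤ T)
    (hTε : T + ENNReal.ofReal ε < ENNReal.ofReal (π / 2)) :
    rugosityBracket (μ' / (I * μ s)) ≤ T + ENNReal.ofReal ε := by
  refine rugosityBracket_le_add_of_mul (c := μ s * logDeriv g (μ s)) ?_
    ((abs_arg_le_of_norm_sub_ofReal_le ha hca).trans hε) ?_ hTε
  · linarith [sub_norm_sub_ofReal_le_re (μ s * logDeriv g (μ s)) a]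
  · rwa [← derivWithin_comp_div_I_mul hg hμ hS hμs]

lemma norm_le_rpow_div_rpow_of_norm_cpow_mul_le {l m M : ℝ} (hl : 0 < l) (hm : 0 < m)
    {z u : ℂ} (hu : m ≤ ‖u‖) (hM : ‖z ^ (l : ℂ) * u‖ ≤ M) :
    ‖z‖ ≤ M ^ (1 / l) / m ^ (1 / l) := by
  have hM0 : 0 ≤ M := (norm_nonneg _).trans hM
  rw [norm_mul, norm_cpow_real] at hM
  rw [← div_rpow hM0 hm.le, one_div, le_rpow_inv_iff_of_pos (norm_nonneg _) (by positivity) hl,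
    le_div_iff₀ hm]
  exact (mul_le_mul_of_nonneg_left hu (by positivity)).trans hM

theorem rugosity_estimate_backward_general
    (l : ℝ) (hl : 0 < l) (R₀ : ℝ) (hR₀ : 0 < R₀)
    (h : ℂ → ℂ) (hh : DifferentiableOn ℂ h (Metric.ball 0 R₀)) (hh0 : h 0 ≠ 0)
    (α β : ℝ) (hβ : β < Real.pi)
    (g : ℂ → ℂ) (hg : ∀ z : ℂ, g z = z ^ (l : ℂ) * h z) :
    ∃ r ∈ Set.Ioo (0 : ℝ) R₀, ∃ C > (0 : ℝ),
      ∀ (μ μ' : ℝ → ℂ) (Mg : ℝ),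
        (∀ s ∈ Set.Icc (0 : ℝ) 1, HasDerivWithinAt μ (μ' s) (Set.Icc (0 : ℝ) 1) s) →
        ContinuousOn μ' (Set.Icc (0 : ℝ) 1) →
        (∀ s ∈ Set.Icc (0 : ℝ) 1, μ' s ≠ 0) →
        (∀ s ∈ Set.Icc (0 : ℝ) 1, 0 < ‖μ s‖ ∧ ‖μ s‖ ≤ r) →
        (∀ s ∈ Set.Icc (0 : ℝ) 1, α ≤ Complex.arg (μ s) ∧ Complex.arg (μ s) ≤ β) →
        IsGreatest ((fun s => ‖g (μ s)‖) '' Set.Icc (0 : ℝ) 1) Mg →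
        (∀ s ∈ Set.Icc (0 : ℝ) 1, ‖μ s‖ ≤ C * Mg ^ (1 / l)) ∧
        ((⨆ s : Set.Icc (0 : ℝ) 1,
              rugosityBracket
                (derivWithin (g ∘ μ) (Set.Icc (0 : ℝ) 1) s / (Complex.I * g (μ s)))) +
              ENNReal.ofReal (C * Mg ^ (1 / l)) < ENNReal.ofReal (Real.pi / 2) →
          ∀ s ∈ Set.Icc (0 : ℝ) 1,
            rugosityBracket (μ' s / (Complex.I * μ s)) ≤
              (⨆ s : Set.Icc (0 : ℝ) 1,
                rugosityBracket
                  (derivWithin (g ∘ μ) (Set.Icc (0 : ℝ) 1) s / (Complex.I * g (μ s)))) +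
                ENNReal.ofReal (C * Mg ^ (1 / l))) := by
  obtain ⟨r, hr, m, hm, L, hL, hLr, hloc⟩ :=
    hh.exists_radius_norm_gt_and_norm_logDeriv_lt hR₀ (half_pos hl) hh0
  have hg' : g = fun z => z ^ (l : ℂ) * h z := funext hg
  -- with `D = (Mg/m)^(1/λ)` this `C` gives `C·Mg^(1/λ) = (1 + 2L/λ)·D`, covering `|μ| ≤ D` and
  -- `|arg c| ≤ (2L/λ)·D`
  refine ⟨r, hr, (1 + 2 / l * L) / m ^ (1 / l), by positivity, ?_⟩
  intro μ μ' Mg hμ _ _ hμr hμarg hMg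
  rw [show (1 + 2 / l * L) / m ^ (1 / l) * Mg ^ (1 / l) =
    (1 + 2 / l * L) * (Mg ^ (1 / l) / m ^ (1 / l)) by ring]
  set D := Mg ^ (1 / l) / m ^ (1 / l)
  have hnorm (s : ℝ) (hs : s ∈ Icc 0 1) : ‖μ s‖ ≤ D :=
    norm_le_rpow_div_rpow_of_norm_cpow_mul_le hl hm (hloc _ (hμr s hs).2).2.1.le
      (hg (μ s) ▸ hMg.2 (mem_image_of_mem _ hs))
  have hD : 0 ≤ D := (norm_nonneg _).trans (hnorm 0 (left_mem_Icc.2 zero_le_one))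
  refine ⟨fun s hs => (hnorm s hs).trans (le_mul_of_one_le_left hD (by simp; positivity)),
    fun hS s hs => ?_⟩
  obtain ⟨hdiff, hlow, hlog⟩ := hloc _ (hμr s hs).2
  have hμs : μ s ∈ slitPlane :=
    mem_slitPlane_iff_arg.2 ⟨((hμarg s hs).2.trans_lt hβ).ne, norm_pos_iff.1 (hμr s hs).1⟩
  have hcl : ‖μ s * logDeriv g (μ s) - l‖ ≤ L * ‖μ s‖ := hg' ▸
    norm_mul_logDeriv_cpow_mul_sub_le hμs hdiff (norm_pos_iff.1 (hm.trans hlow)) hlog.le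
  refine rugosityBracket_le_of_norm_mul_logDeriv_sub_le hl
    (hg' ▸ (differentiableAt_id.cpow_const hμs).mul hdiff) (hμ s hs)
    (uniqueDiffOn_Icc_zero_one s hs) (slitPlane_ne_zero hμs) ?_ ?_
    (le_iSup (fun t : Icc (0 : ℝ) 1 => rugosityBracket
      (derivWithin (g ∘ μ) (Icc 0 1) t / (I * g (μ t)))) ⟨s, hs⟩) hS
  · exact hcl.trans ((mul_le_mul_of_nonneg_left (hμr s hs).2 hL.le).trans hLr.le)
  · calc 2 / l * ‖μ s * logDeriv g (μ s) - l‖ ≤ 2 / l * L * ‖μ s‖ := by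
          rw [mul_assoc]; gcongr
      _ ≤ (1 + 2 / l * L) * D := by gcongr; exacts [le_add_of_nonneg_left zero_le_one, hnorm s hs]

/-- For `g(z) = z^λ·h(z)` with `λ > 0`, `h` holomorphic near `0`, `h(0) ≠ 0`, there are
`r ∈ (0,R₀)` and `C > 0` such that for any `C¹` path `μ` in the punctured sector of radius
`r` one has `‖μ‖ ≤ C·(‖μ‖_g)^{1/λ}` and, provided `e_g(μ) + C·(‖μ‖_g)^{1/λ} < π/2`, the
rugosity of `μ` is bounded by the rugosity of `g ∘ μ` plus `C·(‖μ‖_g)^{1/λ}`. -/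
theorem rugosity_estimate_backward
    (l : ℝ) (hl : 0 < l) (R₀ : ℝ) (hR₀ : 0 < R₀)
    (h : ℂ → ℂ) (hh : DifferentiableOn ℂ h (Metric.ball 0 R₀)) (hh0 : h 0 ≠ 0)
    (α β : ℝ) (hα : -Real.pi < α) (hαβ : α ≤ β) (hβ : β < Real.pi)
    (g : ℂ → ℂ) (hg : ∀ z : ℂ, g z = z ^ (l : ℂ) * h z) :
    ∃ r ∈ Set.Ioo (0 : ℝ) R₀, ∃ C > (0 : ℝ),
      ∀ (μ μ' : ℝ → ℂ) (Mg : ℝ),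
        (∀ s ∈ Set.Icc (0 : ℝ) 1, HasDerivWithinAt μ (μ' s) (Set.Icc (0 : ℝ) 1) s) →
        ContinuousOn μ' (Set.Icc (0 : ℝ) 1) →
        (∀ s ∈ Set.Icc (0 : ℝ) 1, μ' s ≠ 0) →
        (∀ s ∈ Set.Icc (0 : ℝ) 1, 0 < ‖μ s‖ ∧ ‖μ s‖ ≤ r) →
        (∀ s ∈ Set.Icc (0 : ℝ) 1, α ≤ Complex.arg (μ s) ∧ Complex.arg (μ s) ≤ β) →
        IsGreatest ((fun s => ‖g (μ s)‖) '' Set.Icc (0 : ℝ) 1) Mg →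
        (∀ s ∈ Set.Icc (0 : ℝ) 1, ‖μ s‖ ≤ C * Mg ^ (1 / l)) ∧
        ((⨆ s : Set.Icc (0 : ℝ) 1,
              rugosityBracket
                (derivWithin (g ∘ μ) (Set.Icc (0 : ℝ) 1) s / (Complex.I * g (μ s)))) +
              ENNReal.ofReal (C * Mg ^ (1 / l)) < ENNReal.ofReal (Real.pi / 2) →
          ∀ s ∈ Set.Icc (0 : ℝ) 1,
            rugosityBracket (μ' s / (Complex.I * μ s)) ≤
              (⨆ s : Set.Icc (0 : ℝ) 1,
                rugosityBracket
                  (derivWithin (g ∘ μ) (Set.Icc (0 : ℝ) 1) s / (Complex.I * g (μ s)))) +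
                ENNReal.ofReal (C * Mg ^ (1 / l))) :=
  rugosity_estimate_backward_general l hl R₀ hR₀ h hh hh0 α β hβ g hg
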